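/- Let γ ∈ (0,2), let L be slowly varying at infinity, and let (n_k)_{k≥0} be a nondecreasing sequence of positive integers with n_k → ∞ and sup_k n_{k+1}/n_k < ∞. If there exists C > 0 such that V(n_k) ≤ C·n_k^γ·L(n_k) for all k, then there exist C' > 0 and x₀ > 0 such that G(x) ≤ C'·x^{2−γ}·L(1/x) for all x ∈ (0, x₀]. -/

import Mathlib

open MeasureTheory Filter Set Topology

/-- Fejér-type kernel: `I_n(y) = sin²(ny/2)/sin²(y/2)` for `y ≠ 0`, `I_n(0) = n²`. -/
noncomputable def fejerKernel (n : ℕ) (y : ℝ) : ℝ :=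
  if y = 0 then (n : ℝ) ^ 2 else Real.sin (n * y / 2) ^ 2 / Real.sin (y / 2) ^ 2

/-- Variance functional `V(n) = ∫_{[0,π]} I_n(y) dμ(y)`. -/
noncomputable def varV (μ : Measure ℝ) (n : ℕ) : ℝ :=
  ∫ y in Icc 0 Real.pi, fejerKernel n y ∂μ

/-- `G(x) = μ([0,x])` for a measure `μ` on `[0,π]`. -/
noncomputable def specG (μ : Measure ℝ) (x : ℝ) : ℝ :=
  (μ (Icc 0 x)).toReal

/-- A function `L : (0,∞) → (0,∞)` is slowly varying at infinity if
`L(λx)/L(x) → 1` as `x → ∞` for every `λ > 0`. -/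
def SlowlyVarying (L : ℝ → ℝ) : Prop :=
  ∀ lam : ℝ, 0 < lam → Tendsto (fun x => L (lam * x) / L x) atTop (𝓝 1)

/-!
Chebyshev's inequality with the Fejér kernel, which is at least `n²/2` on `[0, 1/n]`, gives
`n² G(x) ≤ 2 V(n)` for `x ≤ 1/n`. For small `x` pick `k` with `n_k ≤ 1/x < n_{k+1} ≤ κ n_k`; then
`G(x) ≲ n_k^{γ-2} L(n_k) ≲ x^{2-γ} L(n_k)`, and `L(n_k) ≲ L(1/x)` because `1/x = c n_k` with
`c ∈ [1, κ]`. This last comparison is a weak uniform convergence theorem for slowly varying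
functions: for `h = log ∘ L ∘ exp`, `h(u + s) - h(u) → 0` pointwise, hence in measure for `s` in a
bounded interval, and Steinhaus' covering argument turns this into a bound uniform in `s`.
-/

open Real

lemma abs_sin_nat_mul_le (n : ℕ) (θ : ℝ) : |sin (n * θ)| ≤ n * |sin θ| := by
  induction n with
  | zero => simp
  | succ k ih =>
    calc |sin ((k + 1 : ℕ) * θ)| = |sin (k * θ) * cos θ + cos (k * θ) * sin θ| := by
          rw [Nat.cast_succ, add_mul, one_mul, sin_add]
      _ ≤ |sin (k * θ)| * |cos θ| + |cos (k * θ)| * |sin θ| := by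
          rw [← abs_mul, ← abs_mul]; exact abs_add_le _ _
      _ ≤ k * |sin θ| * 1 + 1 * |sin θ| := by
          gcongr <;> exact abs_cos_le_one _
      _ = (k + 1 : ℕ) * |sin θ| := by push_cast; ring

lemma fejerKernel_nonneg (n : ℕ) (y : ℝ) : 0 ≤ fejerKernel n y := by
  unfold fejerKernel; split <;> positivity

lemma fejerKernel_le_sq (n : ℕ) (y : ℝ) : fejerKernel n y ≤ (n : ℝ) ^ 2 := by
  unfold fejerKernel
  split
  · exact le_rfl
  · refine div_le_of_le_mul₀ (sq_nonneg _) (sq_nonneg _) ?_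
    rw [mul_div_assoc, ← sq_abs, ← sq_abs (sin _), ← mul_pow]
    exact pow_le_pow_left₀ (abs_nonneg _) (abs_sin_nat_mul_le n _) 2

lemma measurable_fejerKernel (n : ℕ) : Measurable (fejerKernel n) :=
  Measurable.ite (measurableSet_singleton 0) measurable_const (by fun_prop)

lemma integrable_fejerKernel (μ : Measure ℝ) [IsFiniteMeasure μ] (n : ℕ) :
    Integrable (fejerKernel n) μ :=
  .of_bound (measurable_fejerKernel n).aestronglyMeasurable _ <| ae_of_all _ fun y => by
    rw [Real.norm_of_nonneg (fejerKernel_nonneg n y)]; exact fejerKernel_le_sq n y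

lemma sq_div_two_le_fejerKernel {n : ℕ} (hn : 0 < n) {y : ℝ} (hy : y ∈ Icc 0 (1 / (n : ℝ))) :
    (n : ℝ) ^ 2 / 2 ≤ fejerKernel n y := by
  obtain ⟨hy0, hy1⟩ := hy
  rcases hy0.eq_or_lt with rfl | hy0
  · simp [fejerKernel]
  have hn1 : (1 : ℝ) ≤ n := by exact_mod_cast hn
  have hny : n * y ≤ 1 := by rwa [le_div_iff₀' (by positivity)] at hy1
  have hnum : 5 / 6 * (n * y / 2) ≤ sin (n * y / 2) := by
    have := sin_ge_sub_cube (x := n * y / 2) (by positivity)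
    have ht : 0 ≤ (n : ℝ) * y := by positivity
    nlinarith [mul_nonneg ht (sub_nonneg.2 hny), mul_nonneg (mul_nonneg ht ht) (sub_nonneg.2 hny)]
  have hden : sin (y / 2) ≤ y / 2 := sin_le (by positivity)
  have hden_pos : 0 < sin (y / 2) :=
    sin_pos_of_pos_of_lt_pi (by positivity) (by nlinarith [pi_gt_three])
  rw [fejerKernel, if_neg hy0.ne', le_div_iff₀ (by positivity)]
  calc (n : ℝ) ^ 2 / 2 * sin (y / 2) ^ 2 ≤ n ^ 2 / 2 * (y / 2) ^ 2 := by gcongr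
    _ ≤ (5 / 6 * (n * y / 2)) ^ 2 := by nlinarith [sq_nonneg ((n : ℝ) * y)]
    _ ≤ sin (n * y / 2) ^ 2 := by gcongr

lemma sq_div_two_mul_specG_le_varV (μ : Measure ℝ) [IsFiniteMeasure μ] {n : ℕ} (hn : 0 < n)
    {x : ℝ} (hx : x ≤ 1 / n) : (n : ℝ) ^ 2 / 2 * specG μ x ≤ varV μ n := by
  have hxπ : x ≤ π :=
    hx.trans <| (div_le_one_of_le₀ (by exact_mod_cast hn) (by positivity)).trans
      (by linarith [pi_gt_three])
  calc (n : ℝ) ^ 2 / 2 * specG μ x = ∫ _ in Icc 0 x, (n : ℝ) ^ 2 / 2 ∂μ := by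
        rw [setIntegral_const, smul_eq_mul, mul_comm, measureReal_def, specG]
    _ ≤ ∫ y in Icc 0 x, fejerKernel n y ∂μ :=
        setIntegral_mono_on (integrableOn_const (measure_ne_top _ _))
          (integrable_fejerKernel μ n).integrableOn measurableSet_Icc
          fun y hy => sq_div_two_le_fejerKernel hn (Icc_subset_Icc_right hx hy)
    _ ≤ varV μ n :=
        setIntegral_mono_set (integrable_fejerKernel μ n).integrableOn
          (ae_of_all _ (fejerKernel_nonneg n)) (Icc_subset_Icc_right hxπ).eventuallyLE

lemma specG_le_of_varV_le {μ : Measure ℝ} [IsFiniteMeasure μ] {n : ℕ} (hn : 0 < n) {x : ℝ}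
    (hx : x ≤ 1 / n) {C γ ℓ : ℝ} (hV : varV μ n ≤ C * (n : ℝ) ^ γ * ℓ) :
    specG μ x ≤ 2 * C * (n : ℝ) ^ (γ - 2) * ℓ := by
  have hn0 : (0 : ℝ) < n := by exact_mod_cast hn
  have hcheb := sq_div_two_mul_specG_le_varV μ hn hx
  rw [rpow_sub hn0, rpow_two, show 2 * C * ((n : ℝ) ^ γ / n ^ 2) * ℓ
    = 2 * (C * n ^ γ * ℓ) / n ^ 2 by ring, le_div_iff₀ (by positivity)]
  linarith

lemma exists_le_lt_succ_of_tendsto_atTop {a : ℕ → ℝ} (ha : Tendsto a atTop atTop) {y : ℝ}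
    (hy : a 0 ≤ y) : ∃ k, a k ≤ y ∧ y < a (k + 1) := by
  by_contra! h
  have hle : ∀ k, a k ≤ y := fun k => Nat.rec hy (fun k hk => h k hk) k
  obtain ⟨k, hk⟩ := (ha.eventually_gt_atTop y).exists
  exact (hle k).not_gt hk

lemma exists_mul_le_one_lt_mul_of_tendsto_atTop {a : ℕ → ℝ} (ha : Tendsto a atTop atTop) {K : ℝ}
    (hK : ∀ k, a (k + 1) ≤ K * a k) {x : ℝ} (hx : 0 < x) (hx0 : x * a 0 ≤ 1) :
    ∃ k, x * a k ≤ 1 ∧ 1 < K * a k * x := by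
  obtain ⟨k, hk, hk1⟩ := exists_le_lt_succ_of_tendsto_atTop ha (y := 1 / x)
    (by rwa [le_div_iff₀' hx])
  refine ⟨k, by rwa [le_div_iff₀' hx] at hk, ?_⟩
  rw [div_lt_iff₀ hx] at hk1
  exact hk1.trans_le (by gcongr; exact hK k)

section UniformConvergence

variable {h : ℝ → ℝ}

lemma tendsto_volume_inter_setOf_le_abs_sub (hmeas : Measurable h)
    (hlim : ∀ s, Tendsto (fun u => h (u + s) - h u) atTop (𝓝 0)) (a : ℝ) {ε : ℝ} (hε : 0 < ε) :
    Tendsto (fun u => volume (Icc 0 a ∩ {s | ε ≤ |h (u + s) - h u|})) atTop (𝓝 0) := by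
  refine tendsto_iff_seq_tendsto.2 fun u hu => ?_
  have hconv : TendstoInMeasure (volume.restrict (Icc 0 a))
      (fun j s => h (u j + s) - h (u j)) atTop 0 :=
    tendstoInMeasure_of_tendsto_ae
      (fun j => ((hmeas.comp (measurable_const_add _)).sub measurable_const).aestronglyMeasurable)
      (ae_of_all _ fun s => (hlim s).comp hu)
  simpa [Function.comp_def, Measure.restrict_apply' measurableSet_Icc, inter_comm] using
    tendstoInMeasure_iff_norm.1 hconv ε hε

lemma eventually_forall_mem_Icc_abs_sub_le (hmeas : Measurable h)
    (hlim : ∀ s, Tendsto (fun u => h (u + s) - h u) atTop (𝓝 0)) {S : ℝ} (hS : 0 < S)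
    {ε : ℝ} (hε : 0 < ε) : ∀ᶠ u in atTop, ∀ s ∈ Icc 0 S, |h (u + s) - h u| ≤ 2 * ε := by
  set bad : ℝ → Set ℝ := fun u => Icc 0 (2 * S) ∩ {s | ε ≤ |h (u + s) - h u|}
  obtain ⟨U, hU⟩ := eventually_atTop.1 <|
    (tendsto_volume_inter_setOf_le_abs_sub hmeas hlim (2 * S) hε).eventually_lt_const
      (ENNReal.ofReal_pos.2 (half_pos hS))
  refine eventually_atTop.2 ⟨U, fun u hu s ⟨hs0, hsS⟩ => ?_⟩
  -- Steinhaus: `[s, 2S]` has length `≥ S`, more than the two bad sets together, so some `v`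
  -- in it is good both for `u` and, after translation by `s`, for `u + s`.
  have hsmall : volume (bad u) + volume ((· + -s) ⁻¹' bad (u + s)) < volume (Icc s (2 * S)) := by
    rw [measure_preimage_add_right, Real.volume_Icc]
    calc volume (bad u) + volume (bad (u + s)) < ENNReal.ofReal (S / 2) + ENNReal.ofReal (S / 2) :=
          ENNReal.add_lt_add (hU u hu) (hU (u + s) (by linarith))
      _ ≤ ENNReal.ofReal (2 * S - s) := by
          rw [← ENNReal.ofReal_add (by linarith) (by linarith)]
          exact ENNReal.ofReal_le_ofReal (by linarith)
  obtain ⟨v, hv, hvbad⟩ := not_subset.1 fun hcover =>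
    ((measure_mono hcover).trans (measure_union_le _ _)).not_gt hsmall
  simp only [mem_union, mem_preimage, not_or] at hvbad
  have h₁ : |h (u + v) - h u| < ε :=
    not_le.1 fun hle => hvbad.1 ⟨⟨by linarith [hv.1], hv.2⟩, hle⟩
  have h₂ : |h (u + s + (v + -s)) - h (u + s)| < ε :=
    not_le.1 fun hle => hvbad.2 ⟨⟨by linarith [hv.1], by linarith [hv.2]⟩, hle⟩
  rw [show u + s + (v + -s) = u + v by ring] at h₂
  calc |h (u + s) - h u| = |(h (u + v) - h u) - (h (u + v) - h (u + s))| := by ring_nf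
    _ ≤ |h (u + v) - h u| + |h (u + v) - h (u + s)| := abs_sub _ _
    _ ≤ 2 * ε := by linarith

end UniformConvergence

namespace SlowlyVarying

variable {L : ℝ → ℝ}

lemma tendsto_log_comp_exp_add_sub (hL : SlowlyVarying L) (hLpos : ∀ x > (0 : ℝ), 0 < L x)
    (s : ℝ) : Tendsto (fun u => log (L (exp (u + s))) - log (L (exp u))) atTop (𝓝 0) := by
  have hlog := (continuousAt_log one_ne_zero).tendsto.comp
    ((hL (exp s) (exp_pos s)).comp tendsto_exp_atTop)
  rw [log_one] at hlog
  refine hlog.congr fun u => ?_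
  rw [Function.comp_apply, Function.comp_apply, exp_add, mul_comm (exp u),
    log_div (hLpos _ (by positivity)).ne' (hLpos _ (exp_pos u)).ne']

lemma eventually_le_exp_two_mul (hL : SlowlyVarying L) (hLmeas : Measurable L)
    (hLpos : ∀ x > (0 : ℝ), 0 < L x) {κ : ℝ} (hκ : 1 < κ) :
    ∀ᶠ t in atTop, ∀ c ∈ Icc 1 κ, L t ≤ exp 2 * L (c * t) := by
  have hunif := eventually_forall_mem_Icc_abs_sub_le (h := fun u => log (L (exp u)))
    (measurable_log.comp (hLmeas.comp measurable_exp)) (hL.tendsto_log_comp_exp_add_sub hLpos)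
    (log_pos hκ) one_pos
  filter_upwards [tendsto_log_atTop.eventually hunif, eventually_gt_atTop 0]
    with t ht ht0 c ⟨hc1, hcκ⟩
  have hc0 : 0 < c := by linarith
  have hdiff := ht (log c) ⟨log_nonneg hc1, log_le_log hc0 hcκ⟩
  rw [exp_add, exp_log ht0, exp_log hc0, mul_comm t] at hdiff
  calc L t = exp (log (L t)) := (exp_log (hLpos t ht0)).symm
    _ ≤ exp (2 + log (L (c * t))) := exp_le_exp.2 (by linarith [abs_le.1 hdiff])
    _ = exp 2 * L (c * t) := by rw [exp_add, exp_log (hLpos _ (by positivity))]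

end SlowlyVarying

theorem spectral_upper_of_variance_upper_subseq_general (μ : Measure ℝ) [IsFiniteMeasure μ]
    (γ : ℝ) (hγ : γ ∈ Ioo (0 : ℝ) 2)
    (L : ℝ → ℝ) (hLmeas : Measurable L) (hLpos : ∀ x > (0 : ℝ), 0 < L x)
    (hL : SlowlyVarying L)
    (n : ℕ → ℕ) (hpos : ∀ k, 0 < n k)
    (htop : Tendsto n atTop atTop)
    (hratio : ∃ κ : ℝ, ∀ k, (n (k + 1) : ℝ) ≤ κ * (n k : ℝ))
    (hV : ∃ C > (0 : ℝ), ∀ k, varV μ (n k) ≤ C * (n k : ℝ) ^ γ * L (n k)) :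
    ∃ C' > (0 : ℝ), ∃ x₀ > (0 : ℝ), ∀ x : ℝ, 0 < x → x ≤ x₀ →
      specG μ x ≤ C' * x ^ (2 - γ) * L (1 / x) := by
  obtain ⟨C, hC, hVle⟩ := hV
  obtain ⟨κ, hκ⟩ := hratio
  set K := max κ 2
  obtain ⟨T, hT⟩ := eventually_atTop.1 <|
    hL.eventually_le_exp_two_mul hLmeas hLpos (one_lt_two.trans_le (le_max_right κ 2))
  have hn0 : (0 : ℝ) < n 0 := by exact_mod_cast hpos 0
  refine ⟨2 * C * K ^ (2 - γ) * exp 2, by positivity, min (1 / n 0) (1 / (K * max T 1)),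
    lt_min (by positivity) (by positivity), fun x hx hxx₀ => ?_⟩
  obtain ⟨k, hxa, hKxa⟩ := exists_mul_le_one_lt_mul_of_tendsto_atTop (a := fun k => (n k : ℝ))
    (K := K) (tendsto_natCast_atTop_atTop.comp htop)
    (fun k => (hκ k).trans (by gcongr; exact le_max_left κ 2)) hx
    ((le_div_iff₀ hn0).1 (hxx₀.trans (min_le_left _ _)))
  have ha : (0 : ℝ) < n k := by exact_mod_cast hpos k
  have hTa : T ≤ n k := by
    have := (le_div_iff₀ (by positivity)).1 (hxx₀.trans (min_le_right _ _))
    nlinarith [le_max_left T 1]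
  have hpow : (n k : ℝ) ^ (γ - 2) ≤ (K * x) ^ (2 - γ) := by
    rw [← neg_sub, rpow_neg ha.le, ← inv_rpow ha.le]
    exact rpow_le_rpow (by positivity) ((inv_le_iff_one_le_mul₀ ha).2 (by linarith))
      (by linarith [hγ.2])
  have hslow : L (n k) ≤ exp 2 * L (1 / x) := by
    have := hT (n k) hTa (1 / (x * n k))
      ⟨(one_le_div (by positivity)).2 hxa, (div_le_iff₀ (by positivity)).2 (by linarith)⟩
    rwa [show 1 / (x * n k) * n k = 1 / x by field_simp] at this
  calc specG μ x ≤ 2 * C * (n k : ℝ) ^ (γ - 2) * L (n k) :=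
        specG_le_of_varV_le (hpos k) ((le_div_iff₀ ha).2 hxa) (hVle k)
    _ ≤ 2 * C * (K * x) ^ (2 - γ) * (exp 2 * L (1 / x)) := by
        gcongr
        exact (hLpos _ ha).le
    _ = 2 * C * K ^ (2 - γ) * exp 2 * x ^ (2 - γ) * L (1 / x) := by
        rw [mul_rpow (by positivity) hx.le]; ring

/-- If `V(n_k) ≤ C n_k^γ L(n_k)` along a nondecreasing integer sequence `n_k → ∞`
with bounded ratios `n_{k+1}/n_k`, then `G(x) ≤ C' x^{2-γ} L(1/x)` near `0`. -/
theorem spectral_upper_of_variance_upper_subseq (μ : Measure ℝ) [IsFiniteMeasure μ]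
    (hsupp : μ (Icc 0 Real.pi)ᶜ = 0)
    (γ : ℝ) (hγ : γ ∈ Ioo (0 : ℝ) 2)
    (L : ℝ → ℝ) (hLmeas : Measurable L) (hLpos : ∀ x > (0 : ℝ), 0 < L x)
    (hL : SlowlyVarying L)
    (n : ℕ → ℕ) (hpos : ∀ k, 0 < n k) (hmono : Monotone n)
    (htop : Tendsto n atTop atTop)
    (hratio : ∃ κ : ℝ, ∀ k, (n (k + 1) : ℝ) ≤ κ * (n k : ℝ))
    (hV : ∃ C > (0 : ℝ), ∀ k, varV μ (n k) ≤ C * (n k : ℝ) ^ γ * L (n k)) :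
    ∃ C' > (0 : ℝ), ∃ x₀ > (0 : ℝ), ∀ x : ℝ, 0 < x → x ≤ x₀ →
      specG μ x ≤ C' * x ^ (2 - γ) * L (1 / x) :=
  spectral_upper_of_variance_upper_subseq_general μ γ hγ L hLmeas hLpos hL n hpos htop hratio hV
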